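/- arXiv:1909.01577 — 5 statements merged into one kernel-verified Lean document; each statement's English description precedes it below -/
import Mathlib

section
/- Let Γ be a countable group, μ a probability measure on Γ, and G_r(x,y) = Σ_{n≥0} r^n μ^{*n}(x^{-1}y) the weighted Green function, with R the radius of convergence of this power series. Then for all x,y ∈ Γ and all 0 < r < R, the function r ↦ r·G_r(x,y) is differentiable and d/dr (r G_r(x,y)) = Σ_{z∈Γ} G_r(x,z) G_r(z,y). -/
section GreenAux

variable {Γ : Type*} [Group Γ] [Countable Γ] [DecidableEq Γ]

/-- One step: from nonnegativity and total mass one of `cnv n`, deduce the fiberwise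
sums defining `cnv (n+1)` converge and `cnv (n+1)` has total mass one. -/
theorem green_step_aux (μ : Γ → ℝ) (hμ : ∀ g, 0 ≤ μ g) (hμ1 : HasSum μ 1)
    (cnv : ℕ → Γ → ℝ) (n : ℕ) (hnn : ∀ g, 0 ≤ cnv n g) (hs1 : HasSum (cnv n) 1)
    (hconvS : ∀ g : Γ, cnv (n + 1) g = ∑' h : Γ, μ h * cnv n (h⁻¹ * g)) :
    (∀ g : Γ, HasSum (fun h => μ h * cnv n (h⁻¹ * g)) (cnv (n + 1) g)) ∧
      HasSum (cnv (n + 1)) 1 := by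
  have hf : (0 : Γ × Γ → ℝ) ≤ (fun p : Γ × Γ => μ p.1 * cnv n p.2) :=
    Pi.le_def.mpr fun p => mul_nonneg (hμ _) (hnn _)
  have hsummable : Summable (fun p : Γ × Γ => μ p.1 * cnv n p.2) := by
    refine (summable_prod_of_nonneg hf).2 ⟨fun x => ?_, ?_⟩
    · exact hs1.summable.mul_left (μ x)
    · refine Summable.congr hμ1.summable (fun h => ?_)
      simp [tsum_mul_left, hs1.tsum_eq]
  have hprod : HasSum (fun p : Γ × Γ => μ p.1 * cnv n p.2) 1 := by
    simpa using hμ1.mul hs1 hsummable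
  have hF : HasSum (fun p : Γ × Γ => μ p.2 * cnv n (p.2⁻¹ * p.1)) 1 := by
    refine (Equiv.hasSum_iff
      ((Equiv.prodShear (Equiv.refl Γ) (fun a => Equiv.mulLeft a)).trans (Equiv.prodComm Γ Γ))
      (f := fun p : Γ × Γ => μ p.2 * cnv n (p.2⁻¹ * p.1))).1 ?_
    refine hprod.congr_fun ?_
    rintro ⟨a, b⟩
    simp [Equiv.prodShear]
  have hfib : ∀ g : Γ, HasSum (fun h => μ h * cnv n (h⁻¹ * g)) (cnv (n + 1) g) := by
    intro g
    have hsum : Summable (fun h => μ h * cnv n (h⁻¹ * g)) := hF.summable.prod_factor g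
    have := hsum.hasSum
    rwa [← hconvS g] at this
  exact ⟨hfib, hF.prod_fiberwise hfib⟩

/-- Chapman–Kolmogorov identity for the convolution powers. -/
theorem green_CK_aux (μ : Γ → ℝ) (hμ : ∀ g, 0 ≤ μ g) (cnv : ℕ → Γ → ℝ)
    (hconv0 : ∀ g : Γ, cnv 0 g = if g = 1 then 1 else 0)
    (hnn : ∀ n g, 0 ≤ cnv n g)
    (hA : ∀ (n : ℕ) (g : Γ), HasSum (fun h => μ h * cnv n (h⁻¹ * g)) (cnv (n + 1) g)) :
    ∀ (m n : ℕ) (g : Γ), HasSum (fun z => cnv m z * cnv n (z⁻¹ * g)) (cnv (m + n) g) := by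
  intro m
  induction m with
  | zero =>
    intro n g
    rw [zero_add]
    refine (hasSum_ite_eq (1 : Γ) (cnv n g)).congr_fun fun z => ?_
    rw [hconv0]
    by_cases h : z = 1 <;> simp [h]
  | succ m ih =>
    intro n g
    have hfibh : ∀ h : Γ, HasSum (fun z => μ h * (cnv m z * cnv n (z⁻¹ * (h⁻¹ * g))))
        (μ h * cnv (m + n) (h⁻¹ * g)) := fun h => (ih n (h⁻¹ * g)).mul_left (μ h)
    have houter : HasSum (fun h => μ h * cnv (m + n) (h⁻¹ * g)) (cnv (m + n + 1) g) :=
      hA (m + n) g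
    have hfpos : (0 : Γ × Γ → ℝ) ≤ fun p : Γ × Γ =>
        μ p.1 * (cnv m p.2 * cnv n (p.2⁻¹ * (p.1⁻¹ * g))) :=
      Pi.le_def.mpr fun p => mul_nonneg (hμ _) (mul_nonneg (hnn _ _) (hnn _ _))
    have hFsum : Summable (fun p : Γ × Γ =>
        μ p.1 * (cnv m p.2 * cnv n (p.2⁻¹ * (p.1⁻¹ * g)))) := by
      refine (summable_prod_of_nonneg hfpos).2 ⟨fun h => ?_, ?_⟩
      · exact (hfibh h).summable
      · refine houter.summable.congr fun h => ?_
        exact ((hfibh h).tsum_eq).symm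
    have hFval : HasSum (fun p : Γ × Γ =>
        μ p.1 * (cnv m p.2 * cnv n (p.2⁻¹ * (p.1⁻¹ * g)))) (cnv (m + n + 1) g) := by
      have h1 := hFsum.hasSum
      have h2 := h1.prod_fiberwise (fun h => hfibh h)
      rw [h2.unique houter] at h1
      exact h1
    have hG : HasSum (fun p : Γ × Γ =>
        μ p.2 * (cnv m (p.2⁻¹ * p.1) * cnv n (p.1⁻¹ * g))) (cnv (m + n + 1) g) := by
      refine (Equiv.hasSum_iff
        ((Equiv.prodShear (Equiv.refl Γ) (fun a => Equiv.mulLeft a)).trans (Equiv.prodComm Γ Γ))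
        (f := fun p : Γ × Γ => μ p.2 * (cnv m (p.2⁻¹ * p.1) * cnv n (p.1⁻¹ * g)))).1 ?_
      refine hFval.congr_fun ?_
      rintro ⟨a, b⟩
      simp [Equiv.prodShear, mul_assoc]
    have hfibw : ∀ w : Γ, HasSum (fun h => μ h * (cnv m (h⁻¹ * w) * cnv n (w⁻¹ * g)))
        (cnv (m + 1) w * cnv n (w⁻¹ * g)) := by
      intro w
      have := (hA m w).mul_right (cnv n (w⁻¹ * g))
      refine this.congr_fun fun h => ?_
      ring
    have hres := hG.prod_fiberwise hfibw
    have heq : m + 1 + n = m + n + 1 := by ring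
    rw [heq]
    exact hres

end GreenAux

/-- Summability of the derived series inside the radius of convergence. -/
theorem green_DS_aux (c : ℕ → ℝ) (hc : ∀ n, 0 ≤ c n) (R t : ℝ) (ht0 : 0 ≤ t) (htR : t < R)
    (hRs : ∀ s : ℝ, 0 ≤ s → s < R → Summable (fun n : ℕ => s ^ n * c n)) :
    Summable (fun N : ℕ => ((N : ℝ) + 1) * (t ^ N * c N)) := by
  set t' : ℝ := (t + R) / 2 with ht'def
  have htt' : t < t' := by rw [ht'def]; linarith
  have ht'R : t' < R := by rw [ht'def]; linarith
  have ht'pos : 0 < t' := lt_of_le_of_lt ht0 htt'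
  have hs := hRs t' ht'pos.le ht'R
  set C : ℝ := ∑' k : ℕ, t' ^ k * c k with hCdef
  have hbd : ∀ n, t' ^ n * c n ≤ C :=
    fun n => Summable.le_tsum hs n (fun m _ => mul_nonneg (pow_nonneg ht'pos.le m) (hc m))
  set q : ℝ := t / t' with hqdef
  have hq0 : 0 ≤ q := div_nonneg ht0 ht'pos.le
  have hq1 : q < 1 := (div_lt_one ht'pos).2 htt'
  have hsum_q : Summable (fun n : ℕ => ((n : ℝ) + 1) * q ^ n) := by
    have h1 := summable_pow_mul_geometric_of_norm_lt_one 1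
      (show ‖q‖ < 1 by rw [Real.norm_eq_abs, abs_of_nonneg hq0]; exact hq1)
    have h2 := summable_geometric_of_lt_one hq0 hq1
    refine (h1.add h2).congr fun n => ?_
    ring
  refine Summable.of_nonneg_of_le
    (fun n => mul_nonneg (by positivity) (mul_nonneg (pow_nonneg ht0 n) (hc n)))
    (fun n => ?_) (hsum_q.mul_left C)
  have hkey : t ^ n * c n = q ^ n * (t' ^ n * c n) := by
    have hq : q ^ n * t' ^ n = t ^ n := by
      rw [hqdef, div_pow, div_mul_cancel₀]
      exact pow_ne_zero n ht'pos.ne'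
    rw [← hq]
    ring
  have h1 : t ^ n * c n ≤ q ^ n * C := by
    rw [hkey]
    exact mul_le_mul_of_nonneg_left (hbd n) (pow_nonneg hq0 n)
  calc ((n : ℝ) + 1) * (t ^ n * c n) ≤ ((n : ℝ) + 1) * (q ^ n * C) := by
        refine mul_le_mul_of_nonneg_left h1 (by positivity)
    _ = C * (((n : ℝ) + 1) * q ^ n) := by ring

/-- The double sum `∑_z G_r(x,z) G_r(z,y)` converges to `∑_N (N+1) r^N conv_N(x⁻¹y)`. -/
theorem green_doubleSum_aux {Γ : Type*} [Group Γ] [Countable Γ] [DecidableEq Γ]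
    (cnv : ℕ → Γ → ℝ) (hnn : ∀ n g, 0 ≤ cnv n g)
    (hCK : ∀ (m n : ℕ) (g : Γ), HasSum (fun z => cnv m z * cnv n (z⁻¹ * g)) (cnv (m + n) g))
    (x y : Γ) (r : ℝ) (hr : 0 ≤ r)
    (hsum : ∀ u v : Γ, Summable (fun n : ℕ => r ^ n * cnv n (u⁻¹ * v)))
    (S : ℝ)
    (hS : HasSum (fun N : ℕ => ((N : ℝ) + 1) * (r ^ N * cnv N (x⁻¹ * y))) S) :
    HasSum (fun z : Γ =>
      (∑' m : ℕ, r ^ m * cnv m (x⁻¹ * z)) * (∑' n : ℕ, r ^ n * cnv n (z⁻¹ * y))) S := by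
  have hfib : ∀ mn : ℕ × ℕ, HasSum
      (fun z : Γ => (r ^ mn.1 * cnv mn.1 (x⁻¹ * z)) * (r ^ mn.2 * cnv mn.2 (z⁻¹ * y)))
      (r ^ (mn.1 + mn.2) * cnv (mn.1 + mn.2) (x⁻¹ * y)) := by
    rintro ⟨m, n⟩
    have base := hCK m n (x⁻¹ * y)
    have h1 : HasSum (fun z : Γ => cnv m (x⁻¹ * z) * cnv n (z⁻¹ * y))
        (cnv (m + n) (x⁻¹ * y)) := by
      have h0 := (Equiv.hasSum_iff (Equiv.mulLeft x⁻¹)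
        (f := fun w : Γ => cnv m w * cnv n (w⁻¹ * (x⁻¹ * y)))).2 base
      refine h0.congr_fun fun z => ?_
      simp [Equiv.mulLeft, mul_inv_rev, mul_assoc]
    have h2 := h1.mul_left (r ^ m * r ^ n)
    simp only [pow_add]
    refine h2.congr_fun fun z => by ring
  have hMar : HasSum (fun p : ℕ × ℕ => r ^ (p.1 + p.2) * cnv (p.1 + p.2) (x⁻¹ * y)) S := by
    have hfibN : ∀ N : ℕ, HasSum
        (fun p : (Finset.HasAntidiagonal.antidiagonal N : Finset (ℕ × ℕ)) =>
          r ^ ((p : ℕ × ℕ).1 + (p : ℕ × ℕ).2) * cnv ((p : ℕ × ℕ).1 + (p : ℕ × ℕ).2) (x⁻¹ * y))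
        (((N : ℝ) + 1) * (r ^ N * cnv N (x⁻¹ * y))) := by
      intro N
      have hfin := hasSum_fintype
        (fun p : (Finset.HasAntidiagonal.antidiagonal N : Finset (ℕ × ℕ)) =>
          r ^ ((p : ℕ × ℕ).1 + (p : ℕ × ℕ).2) * cnv ((p : ℕ × ℕ).1 + (p : ℕ × ℕ).2) (x⁻¹ * y))
      convert hfin using 1
      rw [Finset.sum_coe_sort (Finset.HasAntidiagonal.antidiagonal N)
        (fun p : ℕ × ℕ => r ^ (p.1 + p.2) * cnv (p.1 + p.2) (x⁻¹ * y))]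
      have hcg : ∀ p ∈ Finset.HasAntidiagonal.antidiagonal N,
          r ^ (p.1 + p.2) * cnv (p.1 + p.2) (x⁻¹ * y) = r ^ N * cnv N (x⁻¹ * y) := by
        intro p hp
        rw [Finset.HasAntidiagonal.mem_antidiagonal] at hp
        rw [hp]
      rw [Finset.sum_congr rfl hcg, Finset.sum_const, Finset.Nat.card_antidiagonal,
        nsmul_eq_mul]
      push_cast
      ring
    have hsig : Summable (fun q : Σ N : ℕ, (Finset.HasAntidiagonal.antidiagonal N : Finset (ℕ × ℕ)) =>
        r ^ ((q.2 : ℕ × ℕ).1 + (q.2 : ℕ × ℕ).2)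
          * cnv ((q.2 : ℕ × ℕ).1 + (q.2 : ℕ × ℕ).2) (x⁻¹ * y)) := by
      refine (summable_sigma_of_nonneg ?_).2 ⟨fun N => (hfibN N).summable, ?_⟩
      · intro q
        exact mul_nonneg (pow_nonneg hr _) (hnn _ _)
      · refine hS.summable.congr fun N => ?_
        exact ((hfibN N).tsum_eq).symm
    have hprodsum : Summable (fun p : ℕ × ℕ => r ^ (p.1 + p.2) * cnv (p.1 + p.2) (x⁻¹ * y)) := by
      refine (Equiv.summable_iff Finset.HasAntidiagonal.sigmaAntidiagonalEquivProd).1 ?_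
      exact hsig
    have h1 := hprodsum.hasSum
    have h2 : HasSum (fun q : Σ N : ℕ, (Finset.HasAntidiagonal.antidiagonal N : Finset (ℕ × ℕ)) =>
        r ^ ((q.2 : ℕ × ℕ).1 + (q.2 : ℕ × ℕ).2)
          * cnv ((q.2 : ℕ × ℕ).1 + (q.2 : ℕ × ℕ).2) (x⁻¹ * y))
        (∑' p : ℕ × ℕ, r ^ (p.1 + p.2) * cnv (p.1 + p.2) (x⁻¹ * y)) :=
      (Equiv.hasSum_iff Finset.HasAntidiagonal.sigmaAntidiagonalEquivProd).2 h1
    have h3 := h2.sigma hfibN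
    rwa [h3.unique hS] at h1
  have hHnn : (0 : (ℕ × ℕ) × Γ → ℝ) ≤ fun q : (ℕ × ℕ) × Γ =>
      (r ^ q.1.1 * cnv q.1.1 (x⁻¹ * q.2)) * (r ^ q.1.2 * cnv q.1.2 (q.2⁻¹ * y)) :=
    Pi.le_def.mpr fun q => mul_nonneg (mul_nonneg (pow_nonneg hr _) (hnn _ _))
      (mul_nonneg (pow_nonneg hr _) (hnn _ _))
  have hHsum : Summable (fun q : (ℕ × ℕ) × Γ =>
      (r ^ q.1.1 * cnv q.1.1 (x⁻¹ * q.2)) * (r ^ q.1.2 * cnv q.1.2 (q.2⁻¹ * y))) := by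
    refine (summable_prod_of_nonneg hHnn).2 ⟨fun mn => (hfib mn).summable, ?_⟩
    refine hMar.summable.congr fun mn => ?_
    exact ((hfib mn).tsum_eq).symm
  have hH : HasSum (fun q : (ℕ × ℕ) × Γ =>
      (r ^ q.1.1 * cnv q.1.1 (x⁻¹ * q.2)) * (r ^ q.1.2 * cnv q.1.2 (q.2⁻¹ * y))) S := by
    have h1 := hHsum.hasSum
    have h2 := h1.prod_fiberwise hfib
    rwa [h2.unique hMar] at h1
  have hH' : HasSum (fun q : Γ × (ℕ × ℕ) =>
      (r ^ q.2.1 * cnv q.2.1 (x⁻¹ * q.1)) * (r ^ q.2.2 * cnv q.2.2 (q.1⁻¹ * y))) S := by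
    refine (Equiv.hasSum_iff (Equiv.prodComm (ℕ × ℕ) Γ)
      (f := fun q : Γ × (ℕ × ℕ) =>
        (r ^ q.2.1 * cnv q.2.1 (x⁻¹ * q.1)) * (r ^ q.2.2 * cnv q.2.2 (q.1⁻¹ * y)))).1 ?_
    exact hH.congr_fun fun q => rfl
  have hz : ∀ z : Γ, HasSum (fun mn : ℕ × ℕ =>
      (r ^ mn.1 * cnv mn.1 (x⁻¹ * z)) * (r ^ mn.2 * cnv mn.2 (z⁻¹ * y)))
      ((∑' m : ℕ, r ^ m * cnv m (x⁻¹ * z)) * (∑' n : ℕ, r ^ n * cnv n (z⁻¹ * y))) := by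
    intro z
    have hps : Summable (fun mn : ℕ × ℕ =>
        (r ^ mn.1 * cnv mn.1 (x⁻¹ * z)) * (r ^ mn.2 * cnv mn.2 (z⁻¹ * y))) :=
      hH'.summable.prod_factor z
    exact HasSum.mul (f := fun m : ℕ => r ^ m * cnv m (x⁻¹ * z))
      (g := fun n : ℕ => r ^ n * cnv n (z⁻¹ * y))
      (hsum x z).hasSum (hsum z y).hasSum hps
  exact hH'.prod_fiberwise hz

/-- Derivative of `r ↦ r * G_r(x,y)` is `∑_z G_r(x,z) G_r(z,y)`, for `0 < r < R`,
where `R` is the radius of convergence of the Green power series. -/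
theorem stmt_0 {Γ : Type*} [Group Γ] [Countable Γ] [DecidableEq Γ]
    (μ : Γ → ℝ) (hμ : ∀ g, 0 ≤ μ g) (hμ1 : HasSum μ 1)
    (conv : ℕ → Γ → ℝ)
    (hconv0 : ∀ g : Γ, conv 0 g = if g = 1 then 1 else 0)
    (hconvS : ∀ (n : ℕ) (g : Γ), conv (n + 1) g = ∑' h : Γ, μ h * conv n (h⁻¹ * g))
    (G : ℝ → Γ → Γ → ℝ)
    (hG : ∀ (r : ℝ) (x y : Γ), G r x y = ∑' n : ℕ, r ^ n * conv n (x⁻¹ * y))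
    (R : ℝ)
    (hR : ∀ (x y : Γ) (r : ℝ), 0 ≤ r → r < R →
      Summable (fun n : ℕ => r ^ n * conv n (x⁻¹ * y))) :
    ∀ (x y : Γ) (r : ℝ), 0 < r → r < R →
      Summable (fun z : Γ => G r x z * G r z y) ∧
      HasDerivAt (fun s : ℝ => s * G s x y) (∑' z : Γ, G r x z * G r z y) r := by
  -- basic properties of the convolution powers
  have key : ∀ n : ℕ, (∀ g, 0 ≤ conv n g) ∧ HasSum (conv n) 1 := by
    intro n
    induction n with
    | zero =>
      constructor
      · intro g
        rw [hconv0]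
        by_cases h : g = 1 <;> simp [h]
      · have he : conv 0 = fun g : Γ => if g = 1 then (1 : ℝ) else 0 := funext hconv0
        rw [he]
        exact hasSum_ite_eq 1 1
    | succ n ih =>
      have hstep := green_step_aux μ hμ hμ1 conv n ih.1 ih.2 (hconvS n)
      constructor
      · intro g
        rw [hconvS n g]
        exact tsum_nonneg fun h => mul_nonneg (hμ h) (ih.1 _)
      · exact hstep.2
  have hA : ∀ (n : ℕ) (g : Γ), HasSum (fun h => μ h * conv n (h⁻¹ * g)) (conv (n + 1) g) :=
    fun n g => (green_step_aux μ hμ hμ1 conv n (key n).1 (key n).2 (hconvS n)).1 g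
  have hCK := green_CK_aux μ hμ conv hconv0 (fun n g => (key n).1 g) hA
  intro x y r hr hrR
  have hr0 : (0 : ℝ) ≤ r := hr.le
  -- the derived series at any 0 ≤ t < R
  have hDS : ∀ t : ℝ, 0 ≤ t → t < R →
      Summable (fun N : ℕ => ((N : ℝ) + 1) * (t ^ N * conv N (x⁻¹ * y))) := by
    intro t ht0 htR
    exact green_DS_aux (fun N => conv N (x⁻¹ * y)) (fun n => (key n).1 _) R t ht0 htR
      (fun s hs0 hsR => hR x y s hs0 hsR)
  set S : ℝ := ∑' N : ℕ, ((N : ℝ) + 1) * (r ^ N * conv N (x⁻¹ * y)) with hSdef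
  have hS : HasSum (fun N : ℕ => ((N : ℝ) + 1) * (r ^ N * conv N (x⁻¹ * y))) S :=
    (hDS r hr0 hrR).hasSum
  have hdouble0 := green_doubleSum_aux conv (fun n g => (key n).1 g) hCK x y r hr0
    (fun u v => hR u v r hr0 hrR) S hS
  have hdouble : HasSum (fun z : Γ => G r x z * G r z y) S := by
    refine hdouble0.congr_fun fun z => ?_
    rw [hG r x z, hG r z y]
  refine ⟨hdouble.summable, ?_⟩
  -- the derivative
  set r₁ : ℝ := (r + R) / 2 with hr₁def
  have hrr₁ : r < r₁ := by rw [hr₁def]; linarith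
  have hr₁R : r₁ < R := by rw [hr₁def]; linarith
  have hr₁pos : 0 < r₁ := lt_of_le_of_lt hr0 hrr₁
  have hu : Summable (fun n : ℕ => ((n : ℝ) + 1) * (r₁ ^ n * conv n (x⁻¹ * y))) :=
    hDS r₁ hr₁pos.le hr₁R
  have hmem : r ∈ Metric.ball (0 : ℝ) r₁ := by
    rw [Metric.mem_ball, dist_zero_right, Real.norm_eq_abs, abs_of_nonneg hr0]
    exact hrr₁
  have hderiv : HasDerivAt
      (fun s : ℝ => ∑' n : ℕ, conv n (x⁻¹ * y) * s ^ (n + 1))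
      (∑' n : ℕ, conv n (x⁻¹ * y) * (((n : ℝ) + 1) * r ^ n)) r := by
    refine hasDerivAt_tsum_of_isPreconnected hu Metric.isOpen_ball
      (convex_ball (0 : ℝ) r₁).isPreconnected
      (g := fun n s => conv n (x⁻¹ * y) * s ^ (n + 1))
      (g' := fun n s => conv n (x⁻¹ * y) * (((n : ℝ) + 1) * s ^ n))
      (fun n s _ => ?_) (fun n s hs => ?_) hmem ?_ hmem
    · have h := (hasDerivAt_pow (n + 1) s).const_mul (conv n (x⁻¹ * y))
      refine h.congr_deriv ?_
      push_cast
      ring_nf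
    · have habs : |s| ≤ r₁ := by
        rw [Metric.mem_ball, dist_zero_right, Real.norm_eq_abs] at hs
        exact hs.le
      have hpow : |s| ^ n ≤ r₁ ^ n := pow_le_pow_left₀ (abs_nonneg s) habs n
      have hcn : 0 ≤ conv n (x⁻¹ * y) := (key n).1 _
      rw [Real.norm_eq_abs, abs_mul, abs_mul, abs_pow, abs_of_nonneg hcn,
        abs_of_nonneg (show (0 : ℝ) ≤ (n : ℝ) + 1 by positivity)]
      calc conv n (x⁻¹ * y) * (((n : ℝ) + 1) * |s| ^ n)
          ≤ conv n (x⁻¹ * y) * (((n : ℝ) + 1) * r₁ ^ n) := by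
            refine mul_le_mul_of_nonneg_left ?_ hcn
            exact mul_le_mul_of_nonneg_left hpow (by positivity)
        _ = ((n : ℝ) + 1) * (r₁ ^ n * conv n (x⁻¹ * y)) := by ring
    · refine ((hR x y r hr0 hrR).mul_left r).congr fun n => ?_
      ring
  have hfun : (fun s : ℝ => s * G s x y)
      = fun s : ℝ => ∑' n : ℕ, conv n (x⁻¹ * y) * s ^ (n + 1) := by
    funext s
    rw [hG s x y, ← tsum_mul_left]
    exact tsum_congr fun n => by ring
  have hval : (∑' n : ℕ, conv n (x⁻¹ * y) * (((n : ℝ) + 1) * r ^ n)) = S := by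
    rw [hSdef]
    exact tsum_congr fun n => by ring
  rw [hfun, hdouble.tsum_eq, ← hval]
  exact hderiv
end

section
/- Let (u_k)_{k≥0} be a summable sequence of nonnegative reals, and suppose there are constants K > 0 and C ∈ ℕ such that for all k, l ≥ 0, u_k · u_l ≤ K · Σ_{i=max(0,k+l-C)}^{k+l+C} u_i. Then u_k ≤ K·(2C+1) for every k. -/
/-- A summable nonnegative sequence with `u_k u_l ≤ K ∑_{i=k+l-C}^{k+l+C} u_i`
is bounded by `K(2C+1)`. -/
theorem stmt_3 (u : ℕ → ℝ) (hu : ∀ k, 0 ≤ u k) (hsum : Summable u)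
    (K : ℝ) (hK : 0 < K) (C : ℕ)
    (h : ∀ k l : ℕ, u k * u l ≤ K * ∑ i ∈ Finset.Icc (k + l - C) (k + l + C), u i) :
    ∀ k, u k ≤ K * (2 * C + 1) := by
  have hbdd : BddAbove (Set.range u) := by
    refine ⟨∑' i, u i, ?_⟩
    rintro x ⟨k, rfl⟩
    exact Summable.le_tsum hsum k (fun i _ => hu i)
  set M := ⨆ k, u k with hM
  have hle : ∀ k, u k ≤ M := fun k => le_ciSup hbdd k
  have hpos : 0 < K * (2 * C + 1) := by positivity
  rcases le_or_gt M 0 with hM0 | hM0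
  · intro k; exact (hle k).trans (hM0.trans hpos.le)
  -- M > 0 : sup is attained
  have htend : Filter.Tendsto u Filter.atTop (nhds 0) := hsum.tendsto_atTop_zero
  have hev : ∀ᶠ k in Filter.atTop, u k < M / 2 :=
    htend.eventually (eventually_lt_nhds (by linarith))
  obtain ⟨N, hN⟩ := hev.exists_forall_of_atTop
  have hatt : ∃ k0, M ≤ u k0 := by
    by_contra hc
    push_neg at hc
    set F := Finset.range (N + 1)
    have hFne : F.Nonempty := ⟨0, Finset.mem_range.2 (Nat.succ_pos N)⟩
    set m := F.sup' hFne u with hm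
    have hmM : m < M := by
      obtain ⟨i, _, hi⟩ := Finset.exists_mem_eq_sup' hFne u
      rw [hm, hi]; exact hc i
    have hMle : M ≤ max m (M / 2) := by
      apply ciSup_le
      intro k
      rcases le_or_gt k N with hk | hk
      · exact le_max_of_le_left (Finset.le_sup' u (Finset.mem_range.2 (Nat.lt_succ_of_le hk)))
      · exact le_max_of_le_right (hN k hk.le).le
    exact lt_irrefl M (lt_of_le_of_lt hMle (max_lt hmM (by linarith)))
  obtain ⟨k0, hk0⟩ := hatt
  have huk0 : u k0 = M := le_antisymm (hle k0) hk0
  have hcard : (Finset.Icc (k0 + k0 - C) (k0 + k0 + C)).card ≤ 2 * C + 1 := by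
    rw [Nat.card_Icc]; omega
  have hsumle : ∑ i ∈ Finset.Icc (k0 + k0 - C) (k0 + k0 + C), u i ≤ (2 * C + 1) * M := by
    calc ∑ i ∈ Finset.Icc (k0 + k0 - C) (k0 + k0 + C), u i
        ≤ ∑ _i ∈ Finset.Icc (k0 + k0 - C) (k0 + k0 + C), M :=
          Finset.sum_le_sum (fun i _ => hle i)
      _ = ((Finset.Icc (k0 + k0 - C) (k0 + k0 + C)).card : ℝ) * M := by
          rw [Finset.sum_const, nsmul_eq_mul]
      _ ≤ (2 * C + 1) * M := by
          apply mul_le_mul_of_nonneg_right _ hM0.le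
          exact_mod_cast hcard
  have key : M * M ≤ K * ((2 * C + 1) * M) := by
    calc M * M = u k0 * u k0 := by rw [huk0]
      _ ≤ K * ∑ i ∈ Finset.Icc (k0 + k0 - C) (k0 + k0 + C), u i := h k0 k0
      _ ≤ K * ((2 * C + 1) * M) := by
          exact mul_le_mul_of_nonneg_left hsumle hK.le
  have hMbound : M ≤ K * (2 * C + 1) := by
    have := key
    nlinarith
  intro k
  exact (hle k).trans hMbound
end

section
/- Let ν be a finite Borel measure on ℝ^d and u ∈ ℝ^d such that for every x ∈ ℤ^d, ∫_{ℝ^d} e^{⟨x,v⟩} dν(v) = e^{⟨x,u⟩}. Then ν is the Dirac mass at u, i.e. ν = δ_u. -/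
open MeasureTheory Filter

/-- If a finite Borel measure `ν` on `ℝ^d` satisfies
`∫ e^{⟨x,v⟩} dν(v) = e^{⟨x,u⟩}` for every `x ∈ ℤ^d`, then `ν = δ_u`. -/
theorem stmt_7 {d : ℕ}
    (ν : MeasureTheory.Measure (Fin d → ℝ)) [MeasureTheory.IsFiniteMeasure ν]
    (u : Fin d → ℝ)
    (h : ∀ x : Fin d → ℤ,
      ∫ v, Real.exp (∑ i, (x i : ℝ) * v i) ∂ν = Real.exp (∑ i, (x i : ℝ) * u i)) :
    ν = MeasureTheory.Measure.dirac u := by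
  -- one-dimensional marginal moments
  have key : ∀ (i : Fin d) (t : ℤ),
      ∫ v, Real.exp ((t : ℝ) * v i) ∂ν = Real.exp ((t : ℝ) * u i) := by
    intro i t
    have := h (fun j => if j = i then t else 0)
    have e1 : ∀ w : Fin d → ℝ,
        (∑ j, ((if j = i then t else 0 : ℤ) : ℝ) * w j) = (t : ℝ) * w i := by
      intro w
      rw [Finset.sum_eq_single i]
      · simp
      · intro b _ hb; simp [hb]
      · simp
    simpa only [e1] using this
  -- null sets: for each i, sign c = ±1, ε > 0
  have null_set : ∀ (i : Fin d) (c : ℤ), (c = 1 ∨ c = -1) → ∀ ε : ℝ, 0 < ε →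
      ν {v | (c : ℝ) * (v i - u i) ≥ ε} = 0 := by
    intro i c hc ε hε
    set S : Set (Fin d → ℝ) := {v | (c : ℝ) * (v i - u i) ≥ ε} with hS
    have hmeas : MeasurableSet S := by
      apply measurableSet_le (by fun_prop) (by fun_prop)
    have hbound : ∀ n : ℕ, (ν S).toReal ≤ Real.exp (-(n : ℝ) * ε) := by
      intro n
      have hint : ∫ v, Real.exp (((n : ℝ) * c) * v i) ∂ν
          = Real.exp (((n : ℝ) * c) * u i) := by
        have := key i ((n : ℤ) * c)
        push_cast at this
        exact this
      have hinteg : Integrable (fun v => Real.exp (((n : ℝ) * c) * v i)) ν := by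
        by_contra hni
        rw [integral_undef hni] at hint
        exact (Real.exp_pos _).ne' hint.symm
      have hge : ∀ v ∈ S, Real.exp (((n : ℝ) * c) * u i + (n : ℝ) * ε)
          ≤ Real.exp (((n : ℝ) * c) * v i) := by
        intro v hv
        apply Real.exp_le_exp.2
        have : (n : ℝ) * ε ≤ (n : ℝ) * ((c : ℝ) * (v i - u i)) := by
          exact mul_le_mul_of_nonneg_left hv (Nat.cast_nonneg n)
        nlinarith [this]
      have h1 : Real.exp (((n : ℝ) * c) * u i + (n : ℝ) * ε) * (ν S).toReal
          ≤ ∫ v in S, Real.exp (((n : ℝ) * c) * v i) ∂ν :=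
        setIntegral_ge_of_const_le_real hmeas (measure_ne_top ν S) hge hinteg.integrableOn
      have h2 : ∫ v in S, Real.exp (((n : ℝ) * c) * v i) ∂ν
          ≤ ∫ v, Real.exp (((n : ℝ) * c) * v i) ∂ν :=
        setIntegral_le_integral hinteg (Filter.Eventually.of_forall fun v => (Real.exp_pos _).le)
      have h3 := h1.trans (h2.trans_eq hint)
      rw [Real.exp_add] at h3
      have hE := Real.exp_pos (((n : ℝ) * c) * u i)
      have h4 : (ν S).toReal * Real.exp ((n:ℝ) * ε) ≤ 1 := by nlinarith [(ν S).toReal_nonneg, Real.exp_pos ((n:ℝ) * ε)]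
      calc (ν S).toReal
          = (ν S).toReal * Real.exp ((n:ℝ)*ε) * Real.exp (-(n:ℝ)*ε) := by
            rw [mul_assoc, ← Real.exp_add]; simp
        _ ≤ 1 * Real.exp (-(n:ℝ)*ε) :=
            mul_le_mul_of_nonneg_right h4 (Real.exp_pos _).le
        _ = Real.exp (-(n:ℝ)*ε) := one_mul _
    have htend : Tendsto (fun n : ℕ => Real.exp (-(n : ℝ) * ε)) atTop (nhds 0) := by
      have : Tendsto (fun n : ℕ => -(n : ℝ) * ε) atTop atBot := by
        apply Tendsto.atBot_mul_const hε
        exact tendsto_neg_atBot_iff.2 tendsto_natCast_atTop_atTop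
      exact Real.tendsto_exp_atBot.comp this
    have hle : (ν S).toReal ≤ 0 := ge_of_tendsto' htend hbound
    have : (ν S).toReal = 0 := le_antisymm hle (ν S).toReal_nonneg
    exact (ENNReal.toReal_eq_zero_iff _).1 this |>.resolve_right (measure_ne_top ν S)
  -- total mass 1
  have htotal : ν Set.univ = 1 := by
    have h0 := h 0
    simp only [Pi.zero_apply, Int.cast_zero, zero_mul, Finset.sum_const_zero,
      Real.exp_zero, integral_const, smul_eq_mul, mul_one] at h0
    have := measure_ne_top ν Set.univ
    rw [← ENNReal.ofReal_toReal this, show (ν Set.univ).toReal = 1 from h0, ENNReal.ofReal_one]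
  -- complement of {u} is null
  have hcompl : ν {u}ᶜ = 0 := by
    have hsub : {u}ᶜ ⊆ ⋃ (i : Fin d) (c : ℤ) (_ : c = 1 ∨ c = -1) (k : ℕ),
        {v | (c : ℝ) * (v i - u i) ≥ 1 / (k + 1)} := by
      intro v hv
      have : v ≠ u := hv
      have : ∃ i, v i ≠ u i := by
        by_contra hno
        push_neg at hno
        exact this (funext hno)
      obtain ⟨i, hi⟩ := this
      have habs : 0 < |v i - u i| := abs_pos.2 (sub_ne_zero.2 hi)
      obtain ⟨k, hk⟩ := exists_nat_one_div_lt habs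
      rcases le_or_gt (u i) (v i) with hle | hlt
      · refine Set.mem_iUnion.2 ⟨i, Set.mem_iUnion.2 ⟨1, Set.mem_iUnion.2 ⟨Or.inl rfl,
          Set.mem_iUnion.2 ⟨k, ?_⟩⟩⟩⟩
        have : |v i - u i| = v i - u i := abs_of_nonneg (by linarith)
        simp only [Set.mem_setOf_eq, Int.cast_one, one_mul]
        linarith [hk.le, this]
      · refine Set.mem_iUnion.2 ⟨i, Set.mem_iUnion.2 ⟨-1, Set.mem_iUnion.2 ⟨Or.inr rfl,
          Set.mem_iUnion.2 ⟨k, ?_⟩⟩⟩⟩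
        have : |v i - u i| = -(v i - u i) := abs_of_neg (by linarith)
        simp only [Set.mem_setOf_eq, Int.cast_neg, Int.cast_one, neg_mul, one_mul]
        linarith [hk.le, this]
    refine measure_mono_null hsub ?_
    refine measure_iUnion_null fun i => measure_iUnion_null fun c =>
      measure_iUnion_null fun hc => measure_iUnion_null fun k =>
      null_set i c hc (1 / (k + 1)) (by positivity)
  -- conclude
  ext s hs
  rw [Measure.dirac_apply' u hs]
  by_cases hu : u ∈ s
  · have h1 : ν sᶜ = 0 := measure_mono_null (fun v hv => by
      simp only [Set.mem_compl_iff, Set.mem_singleton_iff]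
      rintro rfl; exact hv hu) hcompl
    have := measure_add_measure_compl (μ := ν) hs
    rw [h1, add_zero, htotal] at this
    simp [this, hu]
  · have h1 : ν s = 0 := measure_mono_null (fun v hv => by
      simp only [Set.mem_compl_iff, Set.mem_singleton_iff]
      rintro rfl; exact hu hv) hcompl
    simp [h1, hu]
end

section
/- Let (X,d) be a metric space, α : {0,1,...,L} → X a geodesic (d(α(i),α(j)) = |i-j|), o ∈ X a basepoint, and let D = min_{0≤i≤L} d(o,α(i)) (assume D is a nonnegative integer and all distances d(o,α(i)) are integers, e.g. X is a connected graph). Let f : ℕ → ℝ≥0 be nonincreasing. Then Σ_{i=0}^{L} f(d(o,α(i))) ≤ (4D+1)·f(D) + 2·Σ_{j>D} f(j). -/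
/-- Quantitative Karlsson visibility lemma: for a geodesic `α : {0,…,L} → X`,
basepoint `o`, integer distances `δ i = d(o, α i)` with minimum `D`, and a
nonincreasing `f`, one has `∑_{i=0}^{L} f(δ i) ≤ (4D+1) f(D) + 2 ∑_{j>D} f(j)`. -/
theorem stmt_9 {X : Type*} [MetricSpace X] (L : ℕ) (α : ℕ → X)
    (hgeo : ∀ i j : ℕ, i ≤ L → j ≤ L → dist (α i) (α j) = |(i : ℝ) - (j : ℝ)|)
    (o : X) (δ : ℕ → ℕ) (hδ : ∀ i : ℕ, i ≤ L → (δ i : ℝ) = dist o (α i))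
    (D : ℕ) (hDle : ∀ i : ℕ, i ≤ L → D ≤ δ i) (hDmem : ∃ i ≤ L, δ i = D)
    (f : ℕ → NNReal) (hmono : ∀ m n : ℕ, m ≤ n → f n ≤ f m) :
    ∑ i ∈ Finset.range (L + 1), (f (δ i) : ENNReal)
      ≤ (4 * D + 1) * (f D : ENNReal) + 2 * ∑' j : ℕ, (f (D + 1 + j) : ENNReal) := by
  obtain ⟨i₀, hi₀L, hi₀D⟩ := hDmem
  have key : ∀ i, i ≤ L → i ≤ δ i + D + i₀ ∧ i₀ ≤ δ i + D + i := by
    intro i hi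
    have h1 := hgeo i i₀ hi hi₀L
    have h2 := dist_triangle_left (α i) (α i₀) o
    rw [← hδ i hi, ← hδ i₀ hi₀L, hi₀D, h1] at h2
    obtain ⟨ha, hb⟩ := abs_le.mp h2
    constructor
    · have : (i : ℝ) ≤ δ i + D + i₀ := by linarith
      exact_mod_cast this
    · have : (i₀ : ℝ) ≤ δ i + D + i := by linarith
      exact_mod_cast this
  set s := Finset.range (L + 1) with hs
  set near := s.filter (fun i => i ≤ i₀ + 2*D ∧ i₀ ≤ i + 2*D) with hnear
  set right := s.filter (fun i => i₀ + 2*D < i) with hright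
  set left := s.filter (fun i => i + 2*D < i₀) with hleft
  have hsub : s ⊆ near ∪ right ∪ left := by
    intro i hi
    simp only [hnear, hright, hleft, hs, Finset.mem_union, Finset.mem_filter,
      Finset.mem_range] at hi ⊢
    omega
  have d1 : Disjoint near right := by
    rw [Finset.disjoint_left]
    intro i hi hj
    simp only [hnear, hright, Finset.mem_filter] at hi hj
    omega
  have d2 : Disjoint (near ∪ right) left := by
    rw [Finset.disjoint_left]
    intro i hi hj
    simp only [hnear, hright, hleft, Finset.mem_union, Finset.mem_filter] at hi hj
    omega
  have step1 : ∑ i ∈ s, (f (δ i) : ENNReal)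
      ≤ ∑ i ∈ near, (f (δ i) : ENNReal) + ∑ i ∈ right, (f (δ i) : ENNReal)
        + ∑ i ∈ left, (f (δ i) : ENNReal) := by
    refine le_trans (Finset.sum_le_sum_of_subset hsub) ?_
    rw [Finset.sum_union d2, Finset.sum_union d1]
  have hmemL : ∀ {i : ℕ}, i ∈ s → i ≤ L := by
    intro i hi; simpa [hs, Nat.lt_succ_iff] using hi
  -- near part
  have hnear_card : near.card ≤ 4*D + 1 := by
    have : near ⊆ Finset.Icc (i₀ - 2*D) (i₀ + 2*D) := by
      intro i hi
      simp only [hnear, Finset.mem_filter] at hi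
      simp only [Finset.mem_Icc]; omega
    calc near.card ≤ (Finset.Icc (i₀ - 2*D) (i₀ + 2*D)).card := Finset.card_le_card this
      _ = i₀ + 2*D + 1 - (i₀ - 2*D) := Nat.card_Icc _ _
      _ ≤ 4*D + 1 := by omega
  have hnearle : ∑ i ∈ near, (f (δ i) : ENNReal) ≤ (4*D + 1) * (f D : ENNReal) := by
    calc ∑ i ∈ near, (f (δ i) : ENNReal) ≤ ∑ _i ∈ near, (f D : ENNReal) := by
          refine Finset.sum_le_sum fun i hi => ?_
          have : i ∈ s := Finset.mem_of_subset (Finset.filter_subset _ _) hi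
          exact_mod_cast hmono D (δ i) (hDle i (hmemL this))
      _ = (near.card : ENNReal) * (f D : ENNReal) := by
          rw [Finset.sum_const, nsmul_eq_mul]
      _ ≤ (4*D + 1) * (f D : ENNReal) := by
          apply mul_le_mul_left
          exact_mod_cast Nat.cast_le.mpr hnear_card
  -- tail bound helper
  have htail : ∀ (T : Finset ℕ) (e : ℕ → ℕ), (∀ i ∈ T, ∀ j ∈ T, e i = e j → i = j) →
      (∀ i ∈ T, D + 1 + e i ≤ δ i) →
      ∑ i ∈ T, (f (δ i) : ENNReal) ≤ ∑' j : ℕ, (f (D + 1 + j) : ENNReal) := by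
    intro T e hinj hle
    calc ∑ i ∈ T, (f (δ i) : ENNReal) ≤ ∑ i ∈ T, (f (D + 1 + e i) : ENNReal) := by
          refine Finset.sum_le_sum fun i hi => ?_
          exact_mod_cast hmono _ _ (hle i hi)
      _ = ∑ j ∈ T.image e, (f (D + 1 + j) : ENNReal) := by rw [Finset.sum_image hinj]
      _ ≤ ∑' j : ℕ, (f (D + 1 + j) : ENNReal) := ENNReal.sum_le_tsum _
  have hrightle : ∑ i ∈ right, (f (δ i) : ENNReal) ≤ ∑' j : ℕ, (f (D + 1 + j) : ENNReal) := by
    refine htail right (fun i => i - (i₀ + 2*D + 1)) ?_ ?_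
    · intro i hi j hj h
      simp only [hright, Finset.mem_filter] at hi hj
      omega
    · intro i hi
      simp only [hright, Finset.mem_filter] at hi
      have := (key i (hmemL hi.1)).1
      omega
  have hleftle : ∑ i ∈ left, (f (δ i) : ENNReal) ≤ ∑' j : ℕ, (f (D + 1 + j) : ENNReal) := by
    refine htail left (fun i => i₀ - (i + 2*D + 1)) ?_ ?_
    · intro i hi j hj h
      simp only [hleft, Finset.mem_filter] at hi hj
      omega
    · intro i hi
      simp only [hleft, Finset.mem_filter] at hi
      have := (key i (hmemL hi.1)).2
      omega
  calc ∑ i ∈ s, (f (δ i) : ENNReal)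
      ≤ ∑ i ∈ near, (f (δ i) : ENNReal) + ∑ i ∈ right, (f (δ i) : ENNReal)
        + ∑ i ∈ left, (f (δ i) : ENNReal) := step1
    _ ≤ (4*D + 1) * (f D : ENNReal) + ∑' j : ℕ, (f (D + 1 + j) : ENNReal)
        + ∑' j : ℕ, (f (D + 1 + j) : ENNReal) := by
        exact add_le_add (add_le_add hnearle hrightle) hleftle
    _ = (4*D + 1) * (f D : ENNReal) + 2 * ∑' j : ℕ, (f (D + 1 + j) : ENNReal) := by
        rw [add_assoc, two_mul]
end

section
/- Let Γ be a countable group, μ a probability measure on Γ, A ⊆ Γ, and for r > 0 let p_{A,r} be the first-return kernel to A for rμ: p_{A,r}(x,y) = Σ_{n≥1} r^n Σ_{z_1,...,z_{n-1} ∉ A} μ(x^{-1}z_1)···μ(z_{n-1}^{-1}y), for x,y ∈ A. Then for all 0 < r ≤ r', all k ≥ 0 and all x,y ∈ A: (r'/r)^k · p_{A,r}^{(k)}(x,y) ≤ p_{A,r'}^{(k)}(x,y). Consequently, if x ∈ A and G_{r'}(x,x) = Σ_n (r')^n μ^{*n}(e) < ∞, then Σ_{k≥0} (r'/r)^k p_{A,r}^{(k)}(x,x)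 ≤ G_{r'}(x,x) < ∞; in particular the spectral radius limsup_k (p_{A,r}^{(k)}(x,x))^{1/k} is at most r/r' < 1 when r < r'. -/
open scoped ENNReal

open Filter Finset in
private lemma stmt_11_regroup_aux (F : ℕ → ℕ → ℝ≥0∞) :
    ∑' m, ∑' j, F m j = ∑' n : ℕ, ∑ m ∈ Finset.range (n + 1), F m (n - m) := by
  calc ∑' m, ∑' j, F m j
      = ∑' p : ℕ × ℕ, F p.1 p.2 := ENNReal.tsum_prod.symm
    _ = ∑' x : Σ n : ℕ, (Finset.HasAntidiagonal.antidiagonal n : Finset (ℕ × ℕ)),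
          F ((x.2 : ℕ × ℕ)).1 ((x.2 : ℕ × ℕ)).2 :=
        (Finset.HasAntidiagonal.sigmaAntidiagonalEquivProd.tsum_eq (fun p : ℕ × ℕ => F p.1 p.2)).symm
    _ = ∑' n : ℕ, ∑' kl : (Finset.HasAntidiagonal.antidiagonal n : Finset (ℕ × ℕ)),
          F ((kl : ℕ × ℕ)).1 ((kl : ℕ × ℕ)).2 := ENNReal.tsum_sigma' _
    _ = ∑' n : ℕ, ∑ m ∈ Finset.range (n + 1), F m (n - m) := by
        refine tsum_congr fun n => ?_
        rw [tsum_fintype, Finset.sum_coe_sort (f := fun kl : ℕ × ℕ => F kl.1 kl.2),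
          Finset.Nat.sum_antidiagonal_eq_sum_range_succ_mk]

private lemma stmt_11_split {Γ : Type*} [Countable Γ] (A : Set Γ) (g : Γ → ℝ≥0∞) :
    ∑' z : A, g z + ∑' z : {z : Γ // z ∉ A}, g z = ∑' z, g z := by
  have h := Summable.tsum_add_tsum_compl (s := A) (f := g) ENNReal.summable ENNReal.summable
  have e : ∑' z : {z : Γ // z ∉ A}, g z = ∑' z : (Aᶜ : Set Γ), g z :=
    tsum_congr_set_coe g (by ext z; exact Iff.rfl)
  rw [e]; exact h

/-- Comparison of first-return kernels at two parameters `r ≤ r'`: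
`(r'/r)^k p_{A,r}^{(k)} ≤ p_{A,r'}^{(k)}`; consequently the Green function of
`p_{A,r}` converges at `r'/r`, bounded by `G_{r'}(x,x)`, and when `r < r'` the
spectral radius of `p_{A,r}` is at most `r/r' < 1`. -/
theorem stmt_11 {Γ : Type*} [Group Γ] [Countable Γ] [DecidableEq Γ]
    (μ : Γ → ℝ≥0∞) (hμ1 : ∑' g, μ g = 1)
    (conv : ℕ → Γ → ℝ≥0∞)
    (hconv0 : ∀ g : Γ, conv 0 g = if g = 1 then 1 else 0)
    (hconvS : ∀ (n : ℕ) (g : Γ), conv (n + 1) g = ∑' h : Γ, μ h * conv n (h⁻¹ * g))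
    (A : Set Γ)
    (q : ℕ → Γ → Γ → ℝ≥0∞)
    (hq1 : ∀ x y : Γ, q 1 x y = μ (x⁻¹ * y))
    (hqS : ∀ (n : ℕ) (x y : Γ),
      q (n + 2) x y = ∑' z : {z : Γ // z ∉ A}, μ (x⁻¹ * (z : Γ)) * q (n + 1) (z : Γ) y)
    (r r' : ℝ≥0∞) (hr : 0 < r) (hr' : r' ≠ ⊤) (hle : r ≤ r')
    (pAr pAr' : Γ → Γ → ℝ≥0∞)
    (hpAr : ∀ x y : Γ, pAr x y = ∑' n : ℕ, r ^ (n + 1) * q (n + 1) x y)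
    (hpAr' : ∀ x y : Γ, pAr' x y = ∑' n : ℕ, r' ^ (n + 1) * q (n + 1) x y)
    (pkr pkr' : ℕ → Γ → Γ → ℝ≥0∞)
    (hpkr0 : ∀ x y : Γ, pkr 0 x y = if x = y then 1 else 0)
    (hpkrS : ∀ (k : ℕ) (x y : Γ),
      pkr (k + 1) x y = ∑' z : A, pAr x (z : Γ) * pkr k (z : Γ) y)
    (hpkr'0 : ∀ x y : Γ, pkr' 0 x y = if x = y then 1 else 0)
    (hpkr'S : ∀ (k : ℕ) (x y : Γ),
      pkr' (k + 1) x y = ∑' z : A, pAr' x (z : Γ) * pkr' k (z : Γ) y) :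
    (∀ (k : ℕ) (x y : Γ), x ∈ A → y ∈ A → (r' / r) ^ k * pkr k x y ≤ pkr' k x y) ∧
    (∀ x ∈ A, (∑' n : ℕ, r' ^ n * conv n (x⁻¹ * x)) ≠ ⊤ →
      (∑' k : ℕ, (r' / r) ^ k * pkr k x x ≤ ∑' n : ℕ, r' ^ n * conv n (x⁻¹ * x)) ∧
      (r < r' → Filter.limsup (fun k : ℕ => (pkr k x x) ^ (1 / (k : ℝ)))
        Filter.atTop ≤ r / r')) := by
  have hrne : r ≠ 0 := hr.ne'
  have hrtop : r ≠ ⊤ := fun h => hr' (top_le_iff.mp (h ▸ hle))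
  -- comparison of the single-step kernels
  have pA_le : ∀ x y : Γ, r' / r * pAr x y ≤ pAr' x y := by
    intro x y
    rw [hpAr, hpAr', ← ENNReal.tsum_mul_left]
    refine ENNReal.tsum_le_tsum fun n => ?_
    have h1 : r' / r * (r ^ (n + 1) * q (n + 1) x y)
        = (r' * r ^ n) * q (n + 1) x y := by
      rw [pow_succ']
      rw [← mul_assoc, ← mul_assoc, ENNReal.div_mul_cancel hrne hrtop]
    rw [h1]
    refine mul_le_mul_left ?_ _
    rw [pow_succ']
    exact mul_le_mul_right (pow_le_pow_left₀ (zero_le (a := r)) hle n) r'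
  -- Part 1, proven without membership assumptions
  have part1 : ∀ (k : ℕ) (x y : Γ), (r' / r) ^ k * pkr k x y ≤ pkr' k x y := by
    intro k
    induction k with
    | zero => intro x y; simp [hpkr0, hpkr'0]
    | succ k ih =>
      intro x y
      rw [hpkrS, hpkr'S, ← ENNReal.tsum_mul_left]
      refine ENNReal.tsum_le_tsum fun z => ?_
      have h1 : (r' / r) ^ (k + 1) * (pAr x z * pkr k z y)
          = (r' / r * pAr x z) * ((r' / r) ^ k * pkr k z y) := by ring
      rw [h1]
      exact mul_le_mul' (pA_le x z) (ih z y)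
  refine ⟨fun k x y _ _ => part1 k x y, fun x hxA hG => ?_⟩
  -- first-passage decomposition inequality
  have FP : ∀ (n : ℕ) (x y : Γ),
      (∑ m ∈ Finset.range n, ∑' z : A, q (m + 1) x (z : Γ) * conv (n - (m + 1)) ((z : Γ)⁻¹ * y))
        ≤ conv n (x⁻¹ * y) := by
    intro n
    induction n with
    | zero => intro x y; simp
    | succ n ih =>
      intro x y
      have hR : conv (n + 1) (x⁻¹ * y) = ∑' w : Γ, μ (x⁻¹ * w) * conv n (w⁻¹ * y) := by
        rw [hconvS, ← (Equiv.mulLeft x).tsum_eq (fun w => μ (x⁻¹ * w) * conv n (w⁻¹ * y))]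
        refine tsum_congr fun h => ?_
        simp [Equiv.mulLeft, mul_assoc]
      rw [hR, ← stmt_11_split A (fun w => μ (x⁻¹ * w) * conv n (w⁻¹ * y))]
      rw [Finset.sum_range_succ']
      rw [add_comm]
      refine add_le_add ?_ ?_
      · -- the m = 0 term
        refine le_of_eq (tsum_congr fun z => ?_)
        rw [hq1]
        simp
      · -- the terms with m ≥ 1
        have hstep : ∀ m ∈ Finset.range n,
            (∑' z : A, q (m + 1 + 1) x (z : Γ) * conv (n + 1 - (m + 1 + 1)) ((z : Γ)⁻¹ * y))
            = ∑' w : {w : Γ // w ∉ A}, μ (x⁻¹ * (w : Γ)) *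
                ∑' z : A, q (m + 1) (w : Γ) (z : Γ) * conv (n - (m + 1)) ((z : Γ)⁻¹ * y) := by
          intro m _
          have h1 : ∀ z : A, q (m + 1 + 1) x (z : Γ) * conv (n + 1 - (m + 1 + 1)) ((z : Γ)⁻¹ * y)
              = ∑' w : {w : Γ // w ∉ A}, μ (x⁻¹ * (w : Γ)) *
                  (q (m + 1) (w : Γ) (z : Γ) * conv (n - (m + 1)) ((z : Γ)⁻¹ * y)) := by
            intro z
            have : n + 1 - (m + 1 + 1) = n - (m + 1) := by omega
            rw [this, hqS, ← ENNReal.tsum_mul_right]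
            exact tsum_congr fun w => by ring
          simp_rw [h1]
          rw [ENNReal.tsum_comm]
          exact tsum_congr fun w => ENNReal.tsum_mul_left.symm ▸ rfl
        rw [Finset.sum_congr rfl hstep]
        have hswap : ∑ m ∈ Finset.range n, ∑' w : {w : Γ // w ∉ A}, μ (x⁻¹ * (w : Γ)) *
              ∑' z : A, q (m + 1) (w : Γ) (z : Γ) * conv (n - (m + 1)) ((z : Γ)⁻¹ * y)
            = ∑' w : {w : Γ // w ∉ A}, ∑ m ∈ Finset.range n, μ (x⁻¹ * (w : Γ)) *
              ∑' z : A, q (m + 1) (w : Γ) (z : Γ) * conv (n - (m + 1)) ((z : Γ)⁻¹ * y) :=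
          (Summable.tsum_finsetSum fun _ _ => ENNReal.summable).symm
        rw [hswap]
        refine ENNReal.tsum_le_tsum fun w => ?_
        rw [← Finset.mul_sum]
        exact mul_le_mul_right (ih (w : Γ) y) _
  -- the Green function
  set Gre : Γ → Γ → ℝ≥0∞ := fun x y => ∑' n : ℕ, r' ^ n * conv n (x⁻¹ * y) with hGre
  -- Green function super-harmonicity w.r.t. the first-return kernel
  have GR : ∀ x y : Γ,
      (if x = y then (1 : ℝ≥0∞) else 0) + ∑' z : A, pAr' x (z : Γ) * Gre (z : Γ) y
        ≤ Gre x y := by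
    intro x y
    have h0 : Gre x y = (if x = y then (1 : ℝ≥0∞) else 0)
        + ∑' n : ℕ, r' ^ (n + 1) * conv (n + 1) (x⁻¹ * y) := by
      show ∑' n : ℕ, r' ^ n * conv n (x⁻¹ * y) = _
      conv_lhs => rw [tsum_eq_zero_add' ENNReal.summable]
      congr 1
      rw [pow_zero, one_mul, hconv0]
      simp [inv_mul_eq_one]
    rw [h0]
    refine add_le_add_right ?_ _
    have hL : ∑' z : A, pAr' x (z : Γ) * Gre (z : Γ) y
        = ∑' m, ∑' j, r' ^ (m + 1 + j) *
            ∑' z : A, q (m + 1) x (z : Γ) * conv j ((z : Γ)⁻¹ * y) := by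
      have h1 : ∀ z : A, pAr' x (z : Γ) * Gre (z : Γ) y
          = ∑' m, ∑' j, (r' ^ (m + 1 + j) *
              (q (m + 1) x (z : Γ) * conv j ((z : Γ)⁻¹ * y))) := by
        intro z
        rw [hpAr', hGre, ← ENNReal.tsum_mul_right]
        refine tsum_congr fun m => ?_
        rw [← ENNReal.tsum_mul_left]
        refine tsum_congr fun j => ?_
        rw [pow_add]
        ring
      simp_rw [h1]
      rw [ENNReal.tsum_comm]
      refine tsum_congr fun m => ?_
      rw [ENNReal.tsum_comm]
      refine tsum_congr fun j => ?_
      rw [ENNReal.tsum_mul_left]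
    rw [hL, stmt_11_regroup_aux]
    refine ENNReal.tsum_le_tsum fun n => ?_
    have h2 : ∀ m ∈ Finset.range (n + 1),
        r' ^ (m + 1 + (n - m)) * ∑' z : A, q (m + 1) x (z : Γ) * conv (n - m) ((z : Γ)⁻¹ * y)
        = r' ^ (n + 1) * ∑' z : A, q (m + 1) x (z : Γ) * conv (n + 1 - (m + 1)) ((z : Γ)⁻¹ * y) := by
      intro m hm
      rw [Finset.mem_range] at hm
      have e1 : m + 1 + (n - m) = n + 1 := by omega
      have e2 : n + 1 - (m + 1) = n - m := by omega
      rw [e1, e2]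
    rw [Finset.sum_congr rfl h2, ← Finset.mul_sum]
    exact mul_le_mul_right (FP (n + 1) x y) _
  -- partial sums of the Green function of the first-return kernel are dominated
  have C : ∀ (N : ℕ) (x y : Γ), ∑ k ∈ Finset.range N, pkr' k x y ≤ Gre x y := by
    intro N
    induction N with
    | zero => intro x y; simp
    | succ N ih =>
      intro x y
      rw [Finset.sum_range_succ']
      have h1 : ∀ k ∈ Finset.range N, pkr' (k + 1) x y
          = ∑' z : A, pAr' x (z : Γ) * pkr' k (z : Γ) y := fun k _ => hpkr'S k x y
      rw [Finset.sum_congr rfl h1, ← Summable.tsum_finsetSum fun _ _ => ENNReal.summable]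
      refine le_trans ?_ (GR x y)
      rw [hpkr'0, add_comm]
      refine add_le_add_right ?_ _
      refine ENNReal.tsum_le_tsum fun z => ?_
      rw [← Finset.mul_sum]
      exact mul_le_mul_right (ih (z : Γ) y) _
  have key : ∑' k : ℕ, (r' / r) ^ k * pkr k x x ≤ Gre x x := by
    refine le_trans (ENNReal.tsum_le_tsum fun k => part1 k x x) ?_
    rw [ENNReal.tsum_eq_iSup_nat]
    exact iSup_le fun N => C N x x
  refine ⟨key, fun hlt => ?_⟩
  -- spectral radius estimate
  have hr'0 : r' ≠ 0 := (hr.trans hlt).ne'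
  set a : ℝ≥0∞ := r / r' with ha
  have ha0 : a ≠ 0 := by
    rw [ha, ne_eq, ENNReal.div_eq_zero_iff]
    push_neg
    exact ⟨hrne, hr'⟩
  have haT : a ≠ ⊤ := (ENNReal.div_lt_top hrtop hr'0).ne
  have haρ : a * (r' / r) = 1 := by
    rw [ha, div_eq_mul_inv, div_eq_mul_inv]
    have : r * r'⁻¹ * (r' * r⁻¹) = (r * r⁻¹) * (r'⁻¹ * r') := by ring
    rw [this, ENNReal.mul_inv_cancel hrne hrtop, ENNReal.inv_mul_cancel hr'0 hr', mul_one]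
  have hCtop : Gre x x ≠ ⊤ := hG
  have hbound : ∀ k : ℕ, pkr k x x ≤ Gre x x * a ^ k := by
    intro k
    have h1 : pkr k x x = a ^ k * ((r' / r) ^ k * pkr k x x) := by
      rw [← mul_assoc, ← mul_pow, haρ, one_pow, one_mul]
    rw [h1, mul_comm (Gre x x)]
    refine mul_le_mul_right ?_ _
    exact le_trans (ENNReal.le_tsum k) key
  refine le_of_forall_gt_imp_ge_of_dense fun t ht => ?_
  rcases eq_or_ne t ⊤ with rfl | htT
  · exact le_top
  set b : ℝ≥0∞ := t / a with hb
  have hb1 : 1 < b := by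
    rw [hb, ENNReal.lt_div_iff_mul_lt (Or.inl ha0) (Or.inl haT), one_mul]
    exact ht
  have hba : b * a = t := by
    rw [hb, ENNReal.div_mul_cancel ha0 haT]
  obtain ⟨N, hN⟩ : ∃ N : ℕ, Gre x x ≤ b ^ N := by
    rcases eq_or_ne b ⊤ with hbT | hbT
    · exact ⟨1, by rw [hbT, pow_one]; exact le_top⟩
    · have hb1' : 1 < b.toNNReal := by
        have := (ENNReal.toNNReal_lt_toNNReal ENNReal.one_ne_top hbT).mpr hb1
        simpa using this
      obtain ⟨N, hN⟩ := pow_unbounded_of_one_lt (Gre x x).toNNReal hb1'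
      refine ⟨N, ?_⟩
      have : Gre x x = ((Gre x x).toNNReal : ℝ≥0∞) := (ENNReal.coe_toNNReal hCtop).symm
      rw [this]
      calc ((Gre x x).toNNReal : ℝ≥0∞) ≤ ((b.toNNReal ^ N : NNReal) : ℝ≥0∞) :=
            ENNReal.coe_le_coe.mpr hN.le
        _ = b ^ N := by rw [ENNReal.coe_pow, ENNReal.coe_toNNReal hbT]
  refine Filter.limsup_le_of_le (by isBoundedDefault) ?_
  refine Filter.eventually_atTop.mpr ⟨N + 1, fun k hk => ?_⟩
  have hk1 : 1 ≤ k := le_trans (Nat.le_add_left 1 N) hk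
  have hkey : pkr k x x ≤ t ^ k := by
    calc pkr k x x ≤ Gre x x * a ^ k := hbound k
      _ ≤ b ^ k * a ^ k := by
          refine mul_le_mul_left (le_trans hN ?_) _
          exact pow_le_pow_right₀ hb1.le (by omega)
      _ = (b * a) ^ k := (mul_pow b a k).symm
      _ = t ^ k := by rw [hba]
  calc (pkr k x x) ^ (1 / (k : ℝ)) ≤ (t ^ k) ^ (1 / (k : ℝ)) :=
        ENNReal.rpow_le_rpow hkey (by positivity)
    _ = t := by
        rw [← ENNReal.rpow_natCast t k, ← ENNReal.rpow_mul, mul_one_div,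
          div_self (by exact_mod_cast Nat.one_le_iff_ne_zero.mp hk1), ENNReal.rpow_one]
end
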